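/- Let b_n be the sum of the squares of the bitsums over all solus bitstrings of length n. Then \sum_{n\ge0} b_n z^n = z(1-z+z^2)/(1-z-z^2)^3; in particular b_1=1, b_2=2, b_3=7, b_4=16, b_5=38. -/

import Mathlib

open PowerSeries

/-- A bitstring is *solus* if no two adjacent bits are both `1`. -/
def Solus (l : List Bool) : Prop :=
  l.Chain' (fun a b => ¬(a = true ∧ b = true))

open Classical in
/-- `b n` : sum of squared bitsums over all solus bitstrings of length `n`. -/
noncomputable def solusBitsumSq (n : ℕ) : ℕ :=
  ∑ v : Fin n → Bool, if Solus (List.ofFn v) then ((List.ofFn v).count true) ^ 2 else 0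

open Classical in
noncomputable def solusCount (n : ℕ) : ℕ :=
  ∑ v : Fin n → Bool, if Solus (List.ofFn v) then 1 else 0

open Classical in
noncomputable def solusBitsum (n : ℕ) : ℕ :=
  ∑ v : Fin n → Bool, if Solus (List.ofFn v) then (List.ofFn v).count true else 0

lemma sum_succ_decomp (g : List Bool → ℕ) (n : ℕ) :
    ∑ v : Fin (n+1) → Bool, g (List.ofFn v)
      = (∑ w : Fin n → Bool, g (false :: List.ofFn w))
        + ∑ w : Fin n → Bool, g (true :: List.ofFn w) := by
  have h := Fintype.sum_equiv (Fin.consEquiv fun _ : Fin (n+1) => Bool)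
    (fun p : Bool × (Fin n → Bool) => g (List.ofFn (Fin.cons p.1 p.2)))
    (fun v : Fin (n+1) → Bool => g (List.ofFn v)) (fun p => rfl)
  rw [← h, Fintype.sum_prod_type]
  have hof : ∀ (b : Bool) (w : Fin n → Bool),
      List.ofFn (Fin.cons b w) = b :: List.ofFn w := by
    intro b w
    rw [List.ofFn_succ]
    simp
  simp only [hof]
  simp [Fintype.sum_prod_type]
  exact add_comm _ _

lemma sum_succ2_decomp (g : List Bool → ℕ) (n : ℕ) :
    ∑ v : Fin (n+2) → Bool, g (List.ofFn v)
      = (∑ w : Fin (n+1) → Bool, g (false :: List.ofFn w))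
        + ((∑ u : Fin n → Bool, g (true :: false :: List.ofFn u))
          + ∑ u : Fin n → Bool, g (true :: true :: List.ofFn u)) := by
  rw [sum_succ_decomp g (n+1), sum_succ_decomp (fun l => g (true :: l)) n]

lemma solus_false_cons (l : List Bool) : Solus (false :: l) ↔ Solus l := by
  simp [Solus, List.Chain', List.isChain_cons]

lemma solus_true_true (l : List Bool) : ¬ Solus (true :: true :: l) := by
  simp [Solus, List.Chain', List.isChain_cons_cons]

lemma solus_true_false (l : List Bool) : Solus (true :: false :: l) ↔ Solus l := by
  simp [Solus, List.Chain', List.isChain_cons_cons, List.isChain_cons]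

open Classical in
lemma f_rec (n : ℕ) : solusCount (n+2) = solusCount (n+1) + solusCount n := by
  rw [solusCount, sum_succ2_decomp (fun l => if Solus l then 1 else 0) n]
  simp only [solus_false_cons, solus_true_false, solus_true_true, if_false, if_neg (solus_true_true _)]
  simp [solusCount]

lemma count_cons_false (l : List Bool) : (false :: l).count true = l.count true := by simp
lemma count_cons_true (l : List Bool) : (true :: l).count true = l.count true + 1 := by simp

open Classical in
lemma sum_count_add_one (m : ℕ) :
    (∑ u : Fin m → Bool, if Solus (List.ofFn u) then (List.ofFn u).count true + 1 else 0)
      = solusBitsum m + solusCount m := by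
  rw [solusBitsum, solusCount, ← Finset.sum_add_distrib]
  exact Finset.sum_congr rfl fun u _ => by split <;> simp

open Classical in
lemma sum_count_add_one_sq (m : ℕ) :
    (∑ u : Fin m → Bool, if Solus (List.ofFn u) then ((List.ofFn u).count true + 1)^2 else 0)
      = solusBitsumSq m + (2 * solusBitsum m + solusCount m) := by
  rw [solusBitsumSq, solusBitsum, solusCount, Finset.mul_sum, ← Finset.sum_add_distrib,
    ← Finset.sum_add_distrib]
  exact Finset.sum_congr rfl fun u _ => by split <;> [ring; simp]

open Classical in
lemma s_rec (n : ℕ) :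
    solusBitsum (n+2) = solusBitsum (n+1) + (solusBitsum n + solusCount n) := by
  rw [solusBitsum, sum_succ2_decomp (fun l => if Solus l then l.count true else 0) n]
  simp only [solus_false_cons, solus_true_false, if_neg (solus_true_true _),
    count_cons_false, count_cons_true, sum_count_add_one]
  simp [solusBitsum]

open Classical in
lemma b_rec (n : ℕ) :
    solusBitsumSq (n+2)
      = solusBitsumSq (n+1) + (solusBitsumSq n + (2 * solusBitsum n + solusCount n)) := by
  rw [solusBitsumSq, sum_succ2_decomp (fun l => if Solus l then (l.count true)^2 else 0) n]
  simp only [solus_false_cons, solus_true_false, if_neg (solus_true_true _),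
    count_cons_false, count_cons_true, sum_count_add_one_sq]
  simp [solusBitsumSq]

open Classical in
lemma f0 : solusCount 0 = 1 := by
  rw [solusCount]
  simp [Solus, List.Chain']

open Classical in
lemma s0 : solusBitsum 0 = 0 := by
  rw [solusBitsum]
  simp

open Classical in
lemma b0 : solusBitsumSq 0 = 0 := by
  rw [solusBitsumSq]
  simp

open Classical in
lemma f1 : solusCount 1 = 2 := by
  rw [solusCount, show (1:ℕ) = 0 + 1 from rfl,
    sum_succ_decomp (fun l => if Solus l then 1 else 0) 0]
  simp [Solus, List.Chain']

open Classical in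
lemma s1 : solusBitsum 1 = 1 := by
  rw [solusBitsum, show (1:ℕ) = 0 + 1 from rfl,
    sum_succ_decomp (fun l => if Solus l then l.count true else 0) 0]
  simp [Solus, List.Chain']

open Classical in
lemma b1 : solusBitsumSq 1 = 1 := by
  rw [solusBitsumSq, show (1:ℕ) = 0 + 1 from rfl,
    sum_succ_decomp (fun l => if Solus l then (l.count true)^2 else 0) 0]
  simp [Solus, List.Chain']

lemma f2 : solusCount 2 = 3 := by rw [f_rec, f0, f1]
lemma f3 : solusCount 3 = 5 := by rw [f_rec, f1, f2]
lemma s2 : solusBitsum 2 = 2 := by rw [s_rec, s0, s1, f0]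
lemma s3 : solusBitsum 3 = 5 := by rw [s_rec, s1, s2, f1]
lemma b2 : solusBitsumSq 2 = 2 := by rw [b_rec, b0, b1, s0, f0]
lemma b3 : solusBitsumSq 3 = 7 := by rw [b_rec, b1, b2, s1, f1]
lemma b4 : solusBitsumSq 4 = 16 := by rw [show (4:ℕ) = 2+2 from rfl, b_rec, b2, b3, s2, f2]
lemma b5 : solusBitsumSq 5 = 38 := by rw [show (5:ℕ) = 3+2 from rfl, b_rec, b3, b4, s3, f3]

lemma cd2 (A : PowerSeries ℚ) (n : ℕ) :
    coeff (n+2) (A * (1 - X - X^2))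
      = coeff (n+2) A - coeff (n+1) A - coeff n A := by
  rw [show A * (1 - X - X^2) = A - X * A - X^2 * A by ring, map_sub, map_sub,
    show n+2 = n+1+1 from rfl, coeff_succ_X_mul, coeff_X_pow_mul' A 2 (n+1+1)]
  simp

lemma cd1 (A : PowerSeries ℚ) :
    coeff 1 (A * (1 - X - X^2)) = coeff 1 A - coeff 0 A := by
  rw [show A * (1 - X - X^2) = A - X * A - X^2 * A by ring, map_sub, map_sub,
    coeff_succ_X_mul, coeff_X_pow_mul' A 2 1]
  simp

lemma cd0 (A : PowerSeries ℚ) :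
    coeff 0 (A * (1 - X - X^2)) = coeff 0 A := by
  rw [show A * (1 - X - X^2) = A - X * A - X^2 * A by ring, map_sub, map_sub,
    coeff_X_pow_mul' A 2 0, show (X : PowerSeries ℚ) * A = X^1 * A by ring,
    coeff_X_pow_mul' A 1 0]
  simp

lemma gfF : (PowerSeries.mk fun n => (solusCount n : ℚ)) * (1 - X - X^2) = 1 + X := by
  ext n
  rcases n with _|_|n
  · rw [cd0]; simp [f0]
  · rw [cd1]; simp [f0, f1]; norm_num
  · rw [cd2]
    simp only [coeff_mk, f_rec]
    push_cast
    rw [map_add, coeff_one, coeff_X]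
    simp

lemma gfS : (PowerSeries.mk fun n => (solusBitsum n : ℚ)) * (1 - X - X^2)
    = X + X^2 * PowerSeries.mk fun n => (solusCount n : ℚ) := by
  ext n
  rcases n with _|_|n
  · rw [cd0]
    simp [s0, coeff_X_pow_mul']
  · rw [cd1]
    simp [s0, s1, coeff_X_pow_mul']
  · rw [cd2]
    simp only [coeff_mk, s_rec, map_add, coeff_X_pow_mul']
    push_cast
    simp [Nat.succ_ne_zero, coeff_X]

lemma coeff_two_mul (A : PowerSeries ℚ) (n : ℕ) :
    coeff n (2 * A) = 2 * coeff n A := by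
  rw [show (2 : PowerSeries ℚ) = C 2 from (map_ofNat C 2).symm, coeff_C_mul]

lemma gfB : (PowerSeries.mk fun n => (solusBitsumSq n : ℚ)) * (1 - X - X^2)
    = X + 2 * X^2 * (PowerSeries.mk fun n => (solusBitsum n : ℚ))
      + X^2 * PowerSeries.mk fun n => (solusCount n : ℚ) := by
  rw [show (X : PowerSeries ℚ) + 2 * X^2 * (PowerSeries.mk fun n => (solusBitsum n : ℚ))
      + X^2 * (PowerSeries.mk fun n => (solusCount n : ℚ))
    = X + 2 * (X^2 * PowerSeries.mk fun n => (solusBitsum n : ℚ))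
      + X^2 * (PowerSeries.mk fun n => (solusCount n : ℚ)) by ring]
  ext n
  rcases n with _|_|n
  · rw [cd0]
    simp [b0, coeff_two_mul, coeff_X_pow_mul']
  · rw [cd1]
    simp [b0, b1, coeff_two_mul, coeff_X_pow_mul']
  · rw [cd2]
    simp only [coeff_mk, b_rec, map_add, coeff_two_mul, coeff_X_pow_mul']
    push_cast
    simp [Nat.succ_ne_zero, coeff_X]


/-- `∑ bₙ zⁿ = z(1-z+z²)/(1-z-z²)³`, stated as
`(∑ bₙ zⁿ)(1-z-z²)³ = z(1-z+z²)` in `ℚ⟦z⟧`;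
in particular `b₁=1, b₂=2, b₃=7, b₄=16, b₅=38`. -/
theorem solus_bitsum_sq_gf :
    (PowerSeries.mk fun n => (solusBitsumSq n : ℚ)) *
      (1 - (X : PowerSeries ℚ) - X ^ 2) ^ 3 = X * (1 - X + X ^ 2) ∧
    solusBitsumSq 1 = 1 ∧ solusBitsumSq 2 = 2 ∧ solusBitsumSq 3 = 7 ∧
    solusBitsumSq 4 = 16 ∧ solusBitsumSq 5 = 38 := by
  refine ⟨?_, b1, b2, b3, b4, b5⟩
  have h1 := gfF
  have h2 := gfS
  have h3 := gfB
  linear_combination (1 - (X : PowerSeries ℚ) - X^2)^2 * h3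
    + 2 * X^2 * (1 - (X : PowerSeries ℚ) - X^2) * h2
    + (X^2 * (1 - (X : PowerSeries ℚ) - X^2) + 2 * X^4) * h1
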